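/- Let ℓ_1, ℓ_2 be integers with ℓ_2 ≥ ℓ_1 ≥ 1 and ℓ_2 ≥ 2, and let G be a digraph. Call a subdivision of a (ℓ_1,ℓ_2)-spindle in G short if each of its two paths has at most 2ℓ_2 vertices, and long otherwise. Set q = ℓ_1+ℓ_2−1, and for all vertices u,u' ∈ V(G) let R(u,u') ⊆ 𝒫(u,u',ℓ_2) be a subfamily that q-represents 𝒫(u,u',ℓ_2). Suppose G contains no short subdivision of a (ℓ_1,ℓ_2)-spindle. If G contains a subdivision of a (ℓ_1,ℓ_2)-spindle, then there exist vertices u,u',v of G, a (u,v)-path P_1 of length at least ℓ_1, a (u,u')-path P_2^u on ℓ_2 vertices with V(P_2^u) ∈ R(u,u'), and a (u',v)-path P_2^v such that V(P_1) ∩ V(P_2^u) = {u}, V(P_1) ∩ V(P_2^v) = {v}, and V(P_2^u) ∩ V(P_2^v) = {u'}. -/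

import Mathlib

/-!
Take a subdivided spindle `(Q1, Q2)` from `u` to `v` with the fewest vertices in total. It is not
short, so one path, say `Q2`, has at least `2ℓ₂` vertices. Let `u'` be the `ℓ₂`-th vertex of `Q2`
and `B` the last `ℓ₁` vertices of `Q1` together with the last `ℓ₂` vertices of `Q2`; these share
only `v`, so `|B| = ℓ₁ + ℓ₂ - 1`. The first `ℓ₂` vertices of `Q2` form a member of `𝒫(u,u',ℓ₂)`
avoiding `B`, so representation provides a `(u,u')`-path `P` with `V(P) ∈ R(u,u')` avoiding `B`.
If `P` met `Q1` outside `u`, or `Q2` after `u'`, then leaving along `P` and rejoining `Q2` would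
give a spindle with fewer vertices; avoiding `B` is exactly what keeps its paths long enough.
So `Q1`, `P` and the part of `Q2` from `u'` are the required paths.
-/

/-- `p` is a directed path: a nonempty list of pairwise distinct vertices in which
consecutive vertices are joined by arcs of the digraph with arc relation `A`. -/
def IsPath {V : Type*} (A : V → V → Prop) (p : List V) : Prop :=
  p ≠ [] ∧ p.Nodup ∧ p.Chain' A

/-- `p` is a directed `(u,v)`-path. -/
def IsPathFT {V : Type*} (A : V → V → Prop) (u v : V) (p : List V) : Prop :=
  IsPath A p ∧ p.head? = some u ∧ p.getLast? = some v

/-- The vertex set of a path, as a set. -/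
def vset {V : Type*} (p : List V) : Set V := {x | x ∈ p}

/-- The digraph with arc relation `A` contains a subdivision of an `(l1,l2)`-spindle:
two internally vertex-disjoint `(u,v)`-paths of lengths (numbers of arcs) at least
`l1` and at least `l2`, respectively. -/
def ContainsSpindle2 {V : Type*} (A : V → V → Prop) (l1 l2 : ℕ) : Prop :=
  ∃ u v p1 p2, IsPathFT A u v p1 ∧ IsPathFT A u v p2 ∧
    l1 + 1 ≤ p1.length ∧ l2 + 1 ≤ p2.length ∧ p1 ≠ p2 ∧
    ∀ x, x ∈ p1 → x ∈ p2 → x = u ∨ x = v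

/-- A *short* subdivision of an `(l1,l2)`-spindle: one in which each of the two paths
has at most `2 * l2` vertices. -/
def ShortSpindle {V : Type*} (A : V → V → Prop) (l1 l2 : ℕ) : Prop :=
  ∃ u v p1 p2, IsPathFT A u v p1 ∧ IsPathFT A u v p2 ∧
    l1 + 1 ≤ p1.length ∧ l2 + 1 ≤ p2.length ∧ p1 ≠ p2 ∧
    (∀ x, x ∈ p1 → x ∈ p2 → x = u ∨ x = v) ∧
    p1.length ≤ 2 * l2 ∧ p2.length ≤ 2 * l2

/-- `F'` `q`-represents `F` (with respect to the uniform matroid of rank `p + q`):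
`F'` is a subfamily of `F` and for every `q`-element set `B` which is disjoint from some
member of `F`, `B` is also disjoint from some member of `F'`. -/
def Represents {V : Type*} [DecidableEq V] (q : ℕ) (F' F : Set (Finset V)) : Prop :=
  F' ⊆ F ∧ ∀ B : Finset V, B.card = q →
    (∃ S ∈ F, S ∩ B = ∅) → ∃ S ∈ F', S ∩ B = ∅

/-- The family `𝒫(u,u',m)`: all vertex sets `X` of cardinality `m` such that the
subdigraph induced by `X` contains a `(u,u')`-path on `m` vertices. -/
def PathFam {V : Type*} (A : V → V → Prop) (u u' : V) (m : ℕ) : Set (Finset V) :=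
  {X | X.card = m ∧ ∃ p, IsPathFT A u u' p ∧ p.length = m ∧ ∀ x ∈ p, x ∈ X}

namespace List

variable {α : Type*}

theorem exists_split_first (p : α → Prop) {l : List α} (h : ∃ x ∈ l, p x) :
    ∃ F x G, l = F ++ x :: G ∧ p x ∧ ∀ w ∈ F, ¬ p w := by
  induction l with
  | nil => simp at h
  | cons a t ih =>
    by_cases ha : p a
    · exact ⟨[], a, t, rfl, ha, by simp⟩
    · obtain ⟨x, hx, hpx⟩ := h
      have hxt : x ∈ t := (mem_cons.mp hx).resolve_left (by rintro rfl; exact ha hpx)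
      obtain ⟨F, y, G, rfl, hy, hF⟩ := ih ⟨x, hxt, hpx⟩
      exact ⟨a :: F, y, G, rfl, hy, by simpa [ha] using hF⟩

theorem exists_split_last (p : α → Prop) {l : List α} (h : ∃ x ∈ l, p x) :
    ∃ F x G, l = F ++ x :: G ∧ p x ∧ ∀ w ∈ G, ¬ p w := by
  obtain ⟨F, x, G, hl, hx, hF⟩ := exists_split_first p (l := l.reverse) (by simpa using h)
  refine ⟨G.reverse, x, F.reverse, ?_, hx, by simpa using hF⟩
  rw [← reverse_reverse l, hl]
  simp

theorem le_length_of_notMem_rtake {T E : List α} {w : α} {m : ℕ}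
    (h : w ∉ (T ++ w :: E).rtake m) : m ≤ E.length := by
  by_contra! hE
  apply h
  rw [rtake, drop_append_of_le_length (by simp; omega)]
  simp

end List

section Paths

variable {V : Type*} {A : V → V → Prop} {x y z a v b : V} {p l₁ l₂ F G S₁ S₂ : List V}

theorem IsPathFT.nodup (h : IsPathFT A x y p) : p.Nodup := h.1.2.1

theorem IsPathFT.chain (h : IsPathFT A x y p) : p.IsChain A := h.1.2.2

theorem IsPathFT.head_mem (h : IsPathFT A x y p) : x ∈ p := List.mem_of_mem_head? h.2.1

theorem IsPathFT.last_mem (h : IsPathFT A x y p) : y ∈ p := List.mem_of_mem_getLast? h.2.2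

theorem IsPathFT.head_mem_left (h : IsPathFT A x y (l₁ ++ l₂)) (hl : l₁ ≠ []) : x ∈ l₁ := by
  have := h.2.1
  rw [List.head?_append, List.head?_eq_some_head hl] at this
  cases this
  exact List.head_mem hl

theorem IsPathFT.head_notMem_right (h : IsPathFT A x y (l₁ ++ l₂)) (hl : l₁ ≠ []) : x ∉ l₂ :=
  List.disjoint_of_nodup_append h.nodup (h.head_mem_left hl)

theorem IsPathFT.ne_nil_left (h : IsPathFT A x y (l₁ ++ z :: l₂)) (hz : z ≠ x) : l₁ ≠ [] := by
  rintro rfl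
  exact hz (Option.some.inj h.2.1)

theorem IsPathFT.head_notMem_drop (h : IsPathFT A x y p) {n : ℕ} (hn : 0 < n) : x ∉ p.drop n := by
  have hp : p ≠ [] := h.1.1
  rw [← List.take_append_drop n p] at h
  exact h.head_notMem_right (by simp [List.take_eq_nil_iff, hn.ne', hp])

theorem IsPathFT.last_mem_rtake (h : IsPathFT A x y p) {n : ℕ} (hn : 0 < n) : y ∈ p.rtake n := by
  refine List.mem_of_mem_getLast? ?_
  rw [List.rtake, List.getLast?_drop, if_neg (by have := List.length_pos_iff.2 h.1.1; omega)]
  exact h.2.2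

theorem IsPathFT.suffix (h : IsPathFT A x y (l₁ ++ z :: l₂)) : IsPathFT A z y (z :: l₂) :=
  ⟨⟨List.cons_ne_nil _ _, h.nodup.of_append_right, h.chain.right_of_append⟩, rfl,
    by simpa [List.getLast?_append_cons] using h.2.2⟩

theorem IsPathFT.prefix (h : IsPathFT A x y (l₁ ++ z :: l₂)) : IsPathFT A x z (l₁ ++ [z]) := by
  have hsplit : l₁ ++ z :: l₂ = (l₁ ++ [z]) ++ l₂ := by simp
  rw [hsplit] at h
  exact ⟨⟨by simp, h.nodup.of_append_left, h.chain.left_of_append⟩,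
    by simpa [List.head?_append] using h.2.1, by simp⟩

theorem IsPathFT.splice (hP : IsPathFT A x y (F ++ b :: G)) (hS : IsPathFT A a v (S₁ ++ b :: S₂))
    (hd : ∀ w ∈ F, w ∉ b :: S₂) : IsPathFT A x v (F ++ b :: S₂) := by
  have hbS := hS.suffix
  refine ⟨⟨by simp, ?_, ?_⟩, by simpa [List.head?_append] using hP.2.1, by
    simpa [List.getLast?_append_cons] using hbS.2.2⟩
  · exact List.nodup_append.2 ⟨hP.nodup.of_append_left, hbS.nodup,
      fun w hw w' hw' hww' => hd w hw (hww' ▸ hw')⟩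
  · exact List.isChain_append.2 ⟨hP.chain.left_of_append, hbS.chain,
      (List.isChain_append.1 hP.chain).2.2⟩

theorem IsPathFT.reroute {P S : List V} (hP : IsPathFT A x y P) (hS : IsPathFT A a v S)
    (hmeet : ∃ w ∈ P, w ∈ S) :
    ∃ F b G S₁ S₂, P = F ++ b :: G ∧ S = S₁ ++ b :: S₂ ∧ IsPathFT A x v (F ++ b :: S₂) := by
  obtain ⟨F, b, G, rfl, hbS, hF⟩ := List.exists_split_first (· ∈ S) hmeet
  obtain ⟨S₁, S₂, rfl⟩ := List.append_of_mem hbS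
  exact ⟨F, b, G, S₁, S₂, rfl, rfl, hP.splice hS fun w hw hw' => hF w hw (by simp_all)⟩

theorem vset_inter_eq_singleton {p q : List V} {w : V} (hp : w ∈ p) (hq : w ∈ q)
    (h : ∀ z ∈ p, z ∈ q → z = w) : vset p ∩ vset q = {w} := by
  ext z
  simp only [vset, Set.mem_inter_iff, Set.mem_ofPred_eq, Set.mem_singleton_iff]
  exact ⟨fun hz => h z hz.1 hz.2, by rintro rfl; exact ⟨hp, hq⟩⟩

end Paths

section Spindles

variable {V : Type*} {A : V → V → Prop} {l1 l2 : ℕ} {u v : V} {Q1 Q2 : List V}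

structure IsSpindle (A : V → V → Prop) (l1 l2 : ℕ) (u v : V) (p1 p2 : List V) : Prop where
  path_left : IsPathFT A u v p1
  path_right : IsPathFT A u v p2
  length_left : l1 + 1 ≤ p1.length
  length_right : l2 + 1 ≤ p2.length
  ne : p1 ≠ p2
  inter : ∀ x ∈ p1, x ∈ p2 → x = u ∨ x = v

/-- Two internally disjoint paths cannot coincide once one of them has three vertices. -/
theorem IsSpindle.of_inter {p1 p2 : List V} (h2 : 2 ≤ l2) (hp1 : IsPathFT A u v p1)
    (hp2 : IsPathFT A u v p2) (hl1 : l1 + 1 ≤ p1.length) (hl2 : l2 + 1 ≤ p2.length)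
    (hinter : ∀ x ∈ p1, x ∈ p2 → x = u ∨ x = v) : IsSpindle A l1 l2 u v p1 p2 := by
  classical
  refine ⟨hp1, hp2, hl1, hl2, ?_, hinter⟩
  rintro rfl
  have hsub : p1.toFinset ⊆ {u, v} := fun x hx => by
    rw [List.mem_toFinset] at hx
    simpa using hinter x hx hx
  have := Finset.card_le_card hsub
  rw [List.toFinset_card_of_nodup hp1.nodup] at this
  have := Finset.card_le_two (a := u) (b := v)
  omega

theorem IsSpindle.swap (hQ : IsSpindle A l1 l2 u v Q1 Q2) (h12 : l1 ≤ l2)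
    (hQ1 : l2 + 1 ≤ Q1.length) : IsSpindle A l1 l2 u v Q2 Q1 :=
  ⟨hQ.path_right, hQ.path_left, by have := hQ.length_right; omega, hQ1, hQ.ne.symm,
    fun x hx2 hx1 => hQ.inter x hx1 hx2⟩

theorem IsSpindle.shortSpindle (hQ : IsSpindle A l1 l2 u v Q1 Q2) (hQ1 : Q1.length ≤ 2 * l2)
    (hQ2 : Q2.length ≤ 2 * l2) : ShortSpindle A l1 l2 :=
  ⟨u, v, Q1, Q2, hQ.path_left, hQ.path_right, hQ.length_left, hQ.length_right, hQ.ne,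
    hQ.inter, hQ1, hQ2⟩

/-- The last `l1` vertices of `Q1` and the last `l2` vertices of `Q2` share only `v`. -/
theorem IsSpindle.card_rtake_union [DecidableEq V] (hQ : IsSpindle A l1 l2 u v Q1 Q2)
    (h1 : 1 ≤ l1) (h2 : 1 ≤ l2) :
    ((Q1.rtake l1).toFinset ∪ (Q2.rtake l2).toFinset).card = l1 + l2 - 1 := by
  have hinter : (Q1.rtake l1).toFinset ∩ (Q2.rtake l2).toFinset = {v} := by
    ext x
    simp only [Finset.mem_inter, List.mem_toFinset, Finset.mem_singleton]
    refine ⟨fun ⟨hx1, hx2⟩ => ?_, ?_⟩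
    · rcases hQ.inter x (List.drop_subset _ _ hx1) (List.drop_subset _ _ hx2) with rfl | rfl
      · exact absurd hx1 (hQ.path_left.head_notMem_drop (by have := hQ.length_left; omega))
      · rfl
    · rintro rfl
      exact ⟨hQ.path_left.last_mem_rtake h1, hQ.path_right.last_mem_rtake h2⟩
  have hcard : ∀ {q : List V} {l : ℕ}, q.Nodup → l ≤ q.length → (q.rtake l).toFinset.card = l :=
    fun hq hl => by
      rw [List.rtake, List.toFinset_card_of_nodup (hq.sublist (List.drop_sublist _ _)),
        List.length_drop]
      omega
  have := Finset.card_union_add_card_inter (Q1.rtake l1).toFinset (Q2.rtake l2).toFinset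
  rw [hinter, hcard hQ.path_left.nodup (by have := hQ.length_left; omega),
    hcard hQ.path_right.nodup (by have := hQ.length_right; omega), Finset.card_singleton] at this
  omega

structure IsMinSpindle (A : V → V → Prop) (l1 l2 : ℕ) (u v : V) (p1 p2 : List V) : Prop
    extends IsSpindle A l1 l2 u v p1 p2 where
  min : ∀ x y q1 q2, IsSpindle A l1 l2 x y q1 q2 → p1.length + p2.length ≤ q1.length + q2.length

theorem exists_isMinSpindle (h : ContainsSpindle2 A l1 l2) :
    ∃ u v p1 p2, IsMinSpindle A l1 l2 u v p1 p2 := by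
  classical
  have hex : ∃ n u v p1 p2, IsSpindle A l1 l2 u v p1 p2 ∧ p1.length + p2.length = n := by
    obtain ⟨u, v, p1, p2, hp1, hp2, hl1, hl2, hne, hinter⟩ := h
    exact ⟨_, u, v, p1, p2, ⟨hp1, hp2, hl1, hl2, hne, hinter⟩, rfl⟩
  obtain ⟨u, v, p1, p2, hs, hn⟩ := Nat.find_spec hex
  exact ⟨u, v, p1, p2, hs, fun x y q1 q2 hq => hn ▸ Nat.find_min' hex ⟨x, y, q1, q2, hq, rfl⟩⟩

theorem IsMinSpindle.swap (hQ : IsMinSpindle A l1 l2 u v Q1 Q2) (h12 : l1 ≤ l2)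
    (hQ1 : l2 + 1 ≤ Q1.length) : IsMinSpindle A l1 l2 u v Q2 Q1 :=
  ⟨hQ.toIsSpindle.swap h12 hQ1, fun x y q1 q2 hq => add_comm Q2.length _ ▸ hQ.min x y q1 q2 hq⟩

end Spindles

section Minimality

variable {V : Type*} {A : V → V → Prop} {l1 l2 : ℕ} {u v u' : V} {Q1 Q2 pre suf P : List V}

/-- Otherwise let `k` be the last vertex of `P` on `Q1 - u`: following `P` from `k` until it
first meets the part of `Q2` from `u'`, and then `Q2`, gives together with `Q1` from `k` a
smaller spindle. -/
theorem IsMinSpindle.eq_head_of_mem_left (hQ : IsMinSpindle A l1 l2 u v Q1 Q2) (h2 : 2 ≤ l2)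
    (hQ2 : Q2 = pre ++ u' :: suf) (hP : IsPathFT A u u' P) (hPlen : P.length ≤ pre.length + 1)
    (hP1 : ∀ z ∈ P, z ∉ Q1.rtake l1) (hP2 : ∀ z ∈ P, z ∉ Q2.rtake l2) :
    ∀ z ∈ P, z ∈ Q1 → z = u := by
  intro z hzP hzQ1
  by_contra hzu
  obtain ⟨Ap, k, A', rfl, ⟨hkQ1, hku⟩, hA'⟩ :=
    List.exists_split_last (fun w => w ∈ Q1 ∧ w ≠ u) ⟨z, hzP, hzQ1, hzu⟩
  have hApne := hP.ne_nil_left hku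
  have huA' : u ∉ k :: A' := hP.head_notMem_right hApne
  have hA'Q1 : ∀ w ∈ A', w ∉ Q1 := fun w hw hwQ1 =>
    hA' w hw ⟨hwQ1, fun h => huA' (h ▸ List.mem_cons_of_mem _ hw)⟩
  obtain ⟨T, E, hQ1⟩ := List.append_of_mem hkQ1
  have hQ1path : IsPathFT A u v (T ++ k :: E) := hQ1 ▸ hQ.path_left
  have hTne := hQ1path.ne_nil_left hku
  have huE : u ∉ k :: E := hQ1path.head_notMem_right hTne
  have hE : l1 ≤ E.length := List.le_length_of_notMem_rtake (hQ1 ▸ hP1 k (by simp))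
  obtain ⟨F, b, G, S₁, S₂, hkA', hS, hpath⟩ :=
    hP.suffix.reroute (hQ2 ▸ hQ.path_right).suffix ⟨u', hP.suffix.last_mem, List.mem_cons_self⟩
  have hbP : b ∈ k :: A' := by rw [hkA']; simp
  have hS₂ : l2 ≤ S₂.length := by
    have hQ2' : Q2 = (pre ++ S₁) ++ b :: S₂ := by rw [hQ2, hS]; simp
    exact List.le_length_of_notMem_rtake (hQ2' ▸ hP2 b (by simp [hbP]))
  have hspin : IsSpindle A l1 l2 k v (k :: E) (F ++ b :: S₂) := by
    refine .of_inter h2 hQ1path.suffix hpath (by simpa using hE) (by simp; omega) ?_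
    intro w hwE hw
    have hwQ1 : w ∈ Q1 := hQ1 ▸ List.mem_append_right _ hwE
    have hw' : w ∈ k :: A' ∨ w ∈ S₂ := by rw [hkA']; simp at hw ⊢; tauto
    rcases hw' with hwk | hwS
    · rcases List.mem_cons.1 hwk with rfl | hwA'
      · exact Or.inl rfl
      · exact absurd hwQ1 (hA'Q1 w hwA')
    · rcases hQ.inter w hwQ1 (by rw [hQ2, hS]; simp [hwS]) with rfl | rfl
      · exact absurd hwE huE
      · exact Or.inr rfl
  have hmin := hQ.min _ _ _ _ hspin
  have := List.length_pos_iff.2 hTne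
  have := List.length_pos_iff.2 hApne
  rw [hQ1, hQ2] at hmin
  have := congrArg List.length hkA'
  have := congrArg List.length hS
  simp only [List.length_append, List.length_cons] at *
  omega

/-- Otherwise `P` can switch to `Q2` beyond `u'`: following `P` and then `Q2` gives, together
with `Q1`, a smaller spindle. -/
theorem IsMinSpindle.notMem_suffix (hQ : IsMinSpindle A l1 l2 u v Q1 Q2) (h2 : 2 ≤ l2)
    (hQ2 : Q2 = pre ++ u' :: suf) (hP : IsPathFT A u u' P) (hPlen : P.length ≤ pre.length + 1)
    (hP2 : ∀ z ∈ P, z ∉ Q2.rtake l2) (hP1 : ∀ z ∈ P, z ∈ Q1 → z = u) :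
    ∀ z ∈ P, z ∉ suf := by
  intro z hzP hzsuf
  obtain ⟨S₀, S₀', hsuf⟩ := List.append_of_mem hzsuf
  have hQ2' : Q2 = (pre ++ u' :: S₀) ++ z :: S₀' := by rw [hQ2, hsuf]; simp
  obtain ⟨F, b, G, S₁, S₂, hPFG, hS, hpath⟩ :=
    hP.reroute (hQ2' ▸ hQ.path_right).suffix ⟨z, hzP, List.mem_cons_self⟩
  have hbP : b ∈ P := by rw [hPFG]; simp
  have hS₂ : l2 ≤ S₂.length := by
    have hQ2'' : Q2 = (pre ++ u' :: S₀ ++ S₁) ++ b :: S₂ := by rw [hQ2', hS]; simp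
    exact List.le_length_of_notMem_rtake (hQ2'' ▸ hP2 b hbP)
  have hspin : IsSpindle A l1 l2 u v Q1 (F ++ b :: S₂) := by
    refine .of_inter h2 hQ.path_left hpath hQ.length_left (by simp; omega) ?_
    intro w hwQ1 hw
    have hw' : w ∈ P ∨ w ∈ S₂ := by rw [hPFG]; simp at hw ⊢; tauto
    rcases hw' with hwP | hwS
    · exact Or.inl (hP1 w hwP hwQ1)
    · exact hQ.inter w hwQ1 (by rw [hQ2', hS]; simp [hwS])
  have hmin := hQ.min _ _ _ _ hspin
  rw [hQ2'] at hmin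
  have := congrArg List.length hPFG
  have := congrArg List.length hS
  simp only [List.length_append, List.length_cons] at *
  omega

end Minimality

section Rerouting

variable {V : Type*} [DecidableEq V] {A : V → V → Prop} {l1 l2 : ℕ} {u v : V} {Q1 Q2 : List V}

theorem Represents.exists_path {F : Set (Finset V)} {q m : ℕ} {a b : V}
    (hF : Represents q F (PathFam A a b m)) {B : Finset V} (hB : B.card = q) {X : List V}
    (hX : IsPathFT A a b X) (hXlen : X.length = m) (hXB : ∀ z ∈ X, z ∉ B) :
    ∃ P, IsPathFT A a b P ∧ P.length = m ∧ P.toFinset ∈ F ∧ ∀ z ∈ P, z ∉ B := by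
  have hXfam : X.toFinset ∈ PathFam A a b m :=
    ⟨by rw [List.toFinset_card_of_nodup hX.nodup, hXlen], X, hX, hXlen,
      fun z hz => List.mem_toFinset.2 hz⟩
  obtain ⟨Y, hYF, hYB⟩ := hF.2 B hB ⟨_, hXfam, Finset.disjoint_iff_inter_eq_empty.1
    (Finset.disjoint_left.2 fun z hz => hXB z (List.mem_toFinset.1 hz))⟩
  obtain ⟨hYcard, P, hP, hPlen, hPY⟩ := hF.1 hYF
  have hPY' : P.toFinset = Y := Finset.eq_of_subset_of_card_le
    (fun z hz => hPY z (List.mem_toFinset.1 hz))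
    (by rw [hYcard, List.toFinset_card_of_nodup hP.nodup, hPlen])
  refine ⟨P, hP, hPlen, hPY' ▸ hYF, fun z hz hzB => ?_⟩
  have : z ∈ Y ∩ B := Finset.mem_inter.2 ⟨hPY z hz, hzB⟩
  simp [hYB] at this

/-- The first `l2` vertices of `Q2` avoid the last `l1` vertices of `Q1` and the last `l2`
vertices of `Q2`, so representation replaces them by a represented `(u,u')`-path avoiding both. -/
theorem IsSpindle.exists_represented_path {R : V → Set (Finset V)}
    (hQ : IsSpindle A l1 l2 u v Q1 Q2) (h1 : 1 ≤ l1) (h2 : 1 ≤ l2)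
    (hR : ∀ u', Represents (l1 + l2 - 1) (R u') (PathFam A u u' l2)) (hlong : 2 * l2 ≤ Q2.length) :
    ∃ pre u' suf P, Q2 = pre ++ u' :: suf ∧ pre.length + 1 = l2 ∧
      IsPathFT A u u' P ∧ P.length = l2 ∧ P.toFinset ∈ R u' ∧
      (∀ z ∈ P, z ∉ Q1.rtake l1) ∧ (∀ z ∈ P, z ∉ Q2.rtake l2) := by
  obtain ⟨pre, u', suf, hQ2, hpre⟩ : ∃ pre u' suf, Q2 = pre ++ u' :: suf ∧ pre.length + 1 = l2 :=
    ⟨Q2.take (l2 - 1), Q2[l2 - 1], Q2.drop (l2 - 1 + 1),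
      by rw [← List.drop_eq_getElem_cons, List.take_append_drop], by simp; omega⟩
  have htake : Q2.take l2 = pre ++ [u'] := by
    rw [hQ2, ← hpre, List.take_length_add_append]
    simp
  have hX : IsPathFT A u u' (pre ++ [u']) := (hQ2 ▸ hQ.path_right).prefix
  have hXQ2 : ∀ z ∈ pre ++ [u'], z ∉ Q2.rtake l2 := htake ▸ fun z hz =>
    List.disjoint_take_drop hQ.path_right.nodup (by omega) hz
  have hXQ1 : ∀ z ∈ pre ++ [u'], z ∉ Q1.rtake l1 := by
    intro z hz hz1
    have hzQ2 : z ∈ Q2 := by rw [hQ2]; simp at hz ⊢; tauto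
    rcases hQ.inter z (List.drop_subset _ _ hz1) hzQ2 with rfl | rfl
    · exact hQ.path_left.head_notMem_drop (by have := hQ.length_left; omega) hz1
    · exact hXQ2 z hz (hQ.path_right.last_mem_rtake h2)
  obtain ⟨P, hP, hPlen, hPR, hPB⟩ := (hR u').exists_path (hQ.card_rtake_union h1 h2) hX
    (by simp; omega) fun z hz hzB => by
      rcases Finset.mem_union.1 hzB with hz1 | hz2
      · exact hXQ1 z hz (List.mem_toFinset.1 hz1)
      · exact hXQ2 z hz (List.mem_toFinset.1 hz2)
  exact ⟨pre, u', suf, P, hQ2, hpre, hP, hPlen, hPR,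
    fun z hz h => hPB z hz (Finset.mem_union_left _ (List.mem_toFinset.2 h)),
    fun z hz h => hPB z hz (Finset.mem_union_right _ (List.mem_toFinset.2 h))⟩

end Rerouting

theorem IsMinSpindle.exists_paths {V : Type*} [DecidableEq V] {A : V → V → Prop} {l1 l2 : ℕ}
    {u v : V} {Q1 Q2 : List V} {R : V → V → Set (Finset V)}
    (hQ : IsMinSpindle A l1 l2 u v Q1 Q2) (h1 : 1 ≤ l1) (h2 : 2 ≤ l2)
    (hR : ∀ u u', Represents (l1 + l2 - 1) (R u u') (PathFam A u u' l2))
    (hlong : 2 * l2 ≤ Q2.length) :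
    ∃ (u u' v : V) (p1 p2u p2v : List V),
      IsPathFT A u v p1 ∧ l1 + 1 ≤ p1.length ∧
      IsPathFT A u u' p2u ∧ p2u.length = l2 ∧ p2u.toFinset ∈ R u u' ∧
      IsPathFT A u' v p2v ∧
      vset p1 ∩ vset p2u = {u} ∧
      vset p1 ∩ vset p2v = {v} ∧
      vset p2u ∩ vset p2v = {u'} := by
  obtain ⟨pre, u', suf, P, hQ2, hpre, hP, hPlen, hPR, hP1, hP2⟩ :=
    hQ.exists_represented_path h1 (by omega) (hR u) hlong
  have hA := hQ.eq_head_of_mem_left h2 hQ2 hP (by omega) hP1 hP2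
  have hB := hQ.notMem_suffix h2 hQ2 hP (by omega) hP2 hA
  have hQ2path : IsPathFT A u v (pre ++ u' :: suf) := hQ2 ▸ hQ.path_right
  have hu : u ∉ u' :: suf := hQ2path.head_notMem_right (List.ne_nil_of_length_pos (by omega))
  refine ⟨u, u', v, Q1, P, u' :: suf, hQ.path_left, hQ.length_left, hP, hPlen, hPR,
    hQ2path.suffix, ?_, ?_, ?_⟩
  · exact vset_inter_eq_singleton hQ.path_left.head_mem hP.head_mem fun z hz1 hz2 => hA z hz2 hz1
  · refine vset_inter_eq_singleton hQ.path_left.last_mem hQ2path.suffix.last_mem fun z hz1 hz2 => ?_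
    rcases hQ.inter z hz1 (by rw [hQ2]; simp [hz2]) with rfl | rfl
    · exact absurd hz2 hu
    · rfl
  · refine vset_inter_eq_singleton hP.last_mem List.mem_cons_self fun z hz1 hz2 => ?_
    exact (List.mem_cons.1 hz2).resolve_right (hB z hz1)

theorem stmt3_general {V : Type*} [DecidableEq V] (A : V → V → Prop)
    (l1 l2 : ℕ) (h1 : 1 ≤ l1) (h12 : l1 ≤ l2) (h2 : 2 ≤ l2)
    (R : V → V → Set (Finset V))
    (hR : ∀ u u', Represents (l1 + l2 - 1) (R u u') (PathFam A u u' l2))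
    (hshort : ¬ ShortSpindle A l1 l2)
    (hspin : ContainsSpindle2 A l1 l2) :
    ∃ (u u' v : V) (p1 p2u p2v : List V),
      IsPathFT A u v p1 ∧ l1 + 1 ≤ p1.length ∧
      IsPathFT A u u' p2u ∧ p2u.length = l2 ∧ p2u.toFinset ∈ R u u' ∧
      IsPathFT A u' v p2v ∧
      vset p1 ∩ vset p2u = {u} ∧
      vset p1 ∩ vset p2v = {v} ∧
      vset p2u ∩ vset p2v = {u'} := by
  obtain ⟨u, v, Q1, Q2, hQ⟩ := exists_isMinSpindle hspin
  by_cases hQ2 : 2 * l2 < Q2.length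
  · exact hQ.exists_paths h1 h2 hR hQ2.le
  by_cases hQ1 : 2 * l2 < Q1.length
  · exact (hQ.swap h12 (by omega)).exists_paths h1 h2 hR hQ1.le
  exact absurd (hQ.shortSpindle (by omega) (by omega)) hshort

theorem stmt3 {V : Type*} [DecidableEq V] (A : V → V → Prop)
    (harc : ∀ a b, A a b → a ≠ b)
    (l1 l2 : ℕ) (h1 : 1 ≤ l1) (h12 : l1 ≤ l2) (h2 : 2 ≤ l2)
    (R : V → V → Set (Finset V))
    (hR : ∀ u u', Represents (l1 + l2 - 1) (R u u') (PathFam A u u' l2))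
    (hshort : ¬ ShortSpindle A l1 l2)
    (hspin : ContainsSpindle2 A l1 l2) :
    ∃ (u u' v : V) (p1 p2u p2v : List V),
      IsPathFT A u v p1 ∧ l1 + 1 ≤ p1.length ∧
      IsPathFT A u u' p2u ∧ p2u.length = l2 ∧ p2u.toFinset ∈ R u u' ∧
      IsPathFT A u' v p2v ∧
      vset p1 ∩ vset p2u = {u} ∧
      vset p1 ∩ vset p2v = {v} ∧
      vset p2u ∩ vset p2v = {u'} :=
  stmt3_general A l1 l2 h1 h12 h2 R hR hshort hspin
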